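/- arXiv:2112.06859 — 7 statements merged into one kernel-verified Lean document; each statement's English description precedes it below -/
import Mathlib

section
/- For any Boolean algebra A and any element a ∈ A, the set â = {F | F is a proper filter of A and a ∈ F} is compact in the topology on the set of proper filters of A generated by the basis {b̂ | b ∈ A}. -/
/-- A proper filter of a Boolean algebra. -/
structure PropFilter (A : Type*) [BooleanAlgebra A] where
  carrier : Set A
  upward : ∀ a b : A, a ∈ carrier → a ≤ b → b ∈ carrier
  inf_mem : ∀ a b : A, a ∈ carrier → b ∈ carrier → a ⊓ b ∈ carrier
  top_mem : (⊤ : A) ∈ carrier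
  proper : (⊥ : A) ∉ carrier

variable {A : Type*} [BooleanAlgebra A]

/-- The basic (sub)basis sets of `UV(A)`. -/
def hat (a : A) : Set (PropFilter A) := {F | a ∈ F.carrier}

/-- The upper Vietoris topology on the set of proper filters, generated by the sets `hat a`. -/
instance uvTop : TopologicalSpace (PropFilter A) :=
  TopologicalSpace.generateFrom {S | ∃ a : A, S = hat a}

lemma hat_isBasis :
    TopologicalSpace.IsTopologicalBasis {S : Set (PropFilter A) | ∃ a : A, S = hat a} := by
  refine ⟨?_, ?_, rfl⟩
  · rintro _ ⟨b, rfl⟩ _ ⟨c, rfl⟩ F ⟨hb, hc⟩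
    exact ⟨hat (b ⊓ c), ⟨b ⊓ c, rfl⟩, F.inf_mem b c hb hc,
      fun G hG => ⟨G.upward _ _ hG inf_le_left, G.upward _ _ hG inf_le_right⟩⟩
  · apply Set.eq_univ_of_univ_subset
    intro F _
    exact ⟨hat ⊤, ⟨⊤, rfl⟩, F.top_mem⟩

theorem stmt4 (a : A) : IsCompact (hat a) := by
  apply isCompact_of_finite_subcover
  intro ι U hU hcov
  by_cases ha : a = ⊥
  · refine ⟨∅, fun F hF => absurd (ha ▸ hF) F.proper⟩
  · -- the principal filter on `a`
    let F₀ : PropFilter A :=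
      ⟨{x | a ≤ x}, fun x y hx hxy => le_trans hx hxy,
        fun x y hx hy => le_inf hx hy, le_top,
        fun h => ha (le_bot_iff.mp h)⟩
    have hF₀ : F₀ ∈ hat a := le_refl a
    obtain ⟨i, hi⟩ := Set.mem_iUnion.mp (hcov hF₀)
    obtain ⟨S, ⟨b, rfl⟩, hbF₀, hbU⟩ :=
      hat_isBasis.exists_subset_of_mem_open hi (hU i)
    refine ⟨{i}, fun F hF => ?_⟩
    have : F ∈ hat b := F.upward a b hF hbF₀
    simpa using hbU this
end

section
/- For any Boolean algebra A and a ∈ A, the set â = {F proper filter of A | a ∈ F} is regular open in the upset topology of the poset of proper filters of A ordered by inclusion: that is, for every proper filter F, a ∈ F if and only if for every proper filter F' ⊇ F there exists a proper filter F'' ⊇ F' with a ∈ F''. -/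
variable {A : Type*} [BooleanAlgebra A]

theorem stmt8 (a : A) (F : PropFilter A) :
    a ∈ F.carrier ↔ ∀ F' : PropFilter A, F.carrier ⊆ F'.carrier →
      ∃ F'' : PropFilter A, F'.carrier ⊆ F''.carrier ∧ a ∈ F''.carrier := by
  constructor
  · intro ha F' hFF'
    exact ⟨F', subset_rfl, hFF' ha⟩
  · intro h
    by_contra hna
    -- build the filter generated by F and aᶜ
    set G : PropFilter A :=
      { carrier := {b | ∃ f ∈ F.carrier, f ⊓ aᶜ ≤ b}
        upward := fun b c ⟨f, hf, hle⟩ hbc => ⟨f, hf, hle.trans hbc⟩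
        inf_mem := fun b c ⟨f, hf, hfb⟩ ⟨g, hg, hgc⟩ =>
          ⟨f ⊓ g, F.inf_mem f g hf hg, by
            have : f ⊓ g ⊓ aᶜ ≤ (f ⊓ aᶜ) ⊓ (g ⊓ aᶜ) := by
              simp only [le_inf_iff]
              exact ⟨⟨inf_le_left.trans inf_le_left, inf_le_right⟩,
                ⟨inf_le_left.trans inf_le_right, inf_le_right⟩⟩
            exact this.trans (inf_le_inf hfb hgc)⟩
        top_mem := ⟨⊤, F.top_mem, inf_le_left⟩
        proper := by
          rintro ⟨f, hf, hle⟩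
          have : f ⊓ aᶜ = ⊥ := le_bot_iff.mp hle
          have hfa : f ≤ a := sdiff_eq_bot_iff.mp (by simpa [sdiff_eq] using this)
          exact hna (F.upward f a hf hfa) } with hG
    have hFG : F.carrier ⊆ G.carrier := fun b hb => ⟨b, hb, inf_le_left⟩
    obtain ⟨F'', hGF'', haF''⟩ := h G hFG
    have hc : aᶜ ∈ F''.carrier := hGF'' ⟨⊤, F.top_mem, by simp⟩
    have := F''.inf_mem a aᶜ haF'' hc
    rw [inf_compl_eq_bot] at this
    exact F''.proper this
end

section
/- For any Boolean algebra A and elements a, b ∈ A: (a ∨ b)^ = int≤(cl≤(â ∪ b̂)), where int≤ and cl≤ are taken in the upset topology of the inclusion order on proper filters. Explicitly: a ∨ b ∈ F iff for every proper filter F' ⊇ F there is a proper filter F'' ⊇ F' with a ∈ F'' or b ∈ F''. -/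
variable {A : Type*} [BooleanAlgebra A]

/-- The filter generated by a proper filter `F` together with an element `c`
compatible with `F`. -/
def extFilter (F : PropFilter A) (c : A) (h : ∀ x ∈ F.carrier, x ⊓ c ≠ ⊥) :
    PropFilter A where
  carrier := {z | ∃ x ∈ F.carrier, x ⊓ c ≤ z}
  upward := by
    rintro z w ⟨x, hx, hxz⟩ hzw
    exact ⟨x, hx, hxz.trans hzw⟩
  inf_mem := by
    rintro z w ⟨x, hx, hxz⟩ ⟨y, hy, hyw⟩
    refine ⟨x ⊓ y, F.inf_mem _ _ hx hy, le_inf ?_ ?_⟩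
    · exact le_trans (inf_le_inf_right c inf_le_left) hxz
    · exact le_trans (inf_le_inf_right c inf_le_right) hyw
  top_mem := ⟨⊤, F.top_mem, le_top⟩
  proper := by
    rintro ⟨x, hx, hxb⟩
    exact h x hx (le_bot_iff.mp hxb)

theorem extFilter_subset (F : PropFilter A) (c : A) (h : ∀ x ∈ F.carrier, x ⊓ c ≠ ⊥) :
    F.carrier ⊆ (extFilter F c h).carrier :=
  fun x hx => ⟨x, hx, inf_le_left⟩

theorem mem_extFilter (F : PropFilter A) (c : A) (h : ∀ x ∈ F.carrier, x ⊓ c ≠ ⊥) :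
    c ∈ (extFilter F c h).carrier :=
  ⟨⊤, F.top_mem, inf_le_right⟩

theorem stmt9 (a b : A) (F : PropFilter A) :
    a ⊔ b ∈ F.carrier ↔ ∀ F' : PropFilter A, F.carrier ⊆ F'.carrier →
      ∃ F'' : PropFilter A, F'.carrier ⊆ F''.carrier ∧
        (a ∈ F''.carrier ∨ b ∈ F''.carrier) := by
  constructor
  · intro hab F' hFF'
    have hab' : a ⊔ b ∈ F'.carrier := hFF' hab
    by_cases ha : ∀ x ∈ F'.carrier, x ⊓ a ≠ ⊥
    · refine ⟨extFilter F' a ha, extFilter_subset F' a ha, Or.inl (mem_extFilter F' a ha)⟩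
    · push_neg at ha
      obtain ⟨x, hx, hxa⟩ := ha
      have hb : ∀ y ∈ F'.carrier, y ⊓ b ≠ ⊥ := by
        intro y hy hyb
        apply F'.proper
        have hmem : (x ⊓ y) ⊓ (a ⊔ b) ∈ F'.carrier :=
          F'.inf_mem _ _ (F'.inf_mem _ _ hx hy) hab'
        have : (x ⊓ y) ⊓ (a ⊔ b) ≤ ⊥ := by
          rw [inf_sup_left]
          apply sup_le
          · calc x ⊓ y ⊓ a ≤ x ⊓ a := by
                  exact inf_le_inf_right a inf_le_left
               _ = ⊥ := hxa
          · calc x ⊓ y ⊓ b ≤ y ⊓ b := by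
                  exact inf_le_inf_right b inf_le_right
               _ = ⊥ := hyb
        exact F'.upward _ _ hmem this
      exact ⟨extFilter F' b hb, extFilter_subset F' b hb, Or.inr (mem_extFilter F' b hb)⟩
  · intro h
    by_contra hab
    set c := (a ⊔ b)ᶜ with hc
    have hproper : ∀ x ∈ F.carrier, x ⊓ c ≠ ⊥ := by
      intro x hx hxc
      apply hab
      have hle : x ≤ a ⊔ b := by
        have : x ⊓ (a ⊔ b) ⊔ x ⊓ c = x := by
          rw [← inf_sup_left, hc, sup_compl_eq_top, inf_top_eq]
        calc x = x ⊓ (a ⊔ b) ⊔ x ⊓ c := this.symm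
          _ = x ⊓ (a ⊔ b) := by rw [hxc, sup_bot_eq]
          _ ≤ a ⊔ b := inf_le_right
      exact F.upward _ _ hx hle
    obtain ⟨F'', hsub, hor⟩ := h (extFilter F c hproper) (extFilter_subset F c hproper)
    have hcF : c ∈ F''.carrier := hsub (mem_extFilter F c hproper)
    apply F''.proper
    rcases hor with hA | hB
    · have : a ⊓ c ∈ F''.carrier := F''.inf_mem _ _ hA hcF
      refine F''.upward _ _ this ?_
      calc a ⊓ c ≤ a ⊓ aᶜ := inf_le_inf_left a (by rw [hc]; exact compl_le_compl le_sup_left)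
        _ = ⊥ := inf_compl_eq_bot
    · have : b ⊓ c ∈ F''.carrier := F''.inf_mem _ _ hB hcF
      refine F''.upward _ _ this ?_
      calc b ⊓ c ≤ b ⊓ bᶜ := inf_le_inf_left b (by rw [hc]; exact compl_le_compl le_sup_right)
        _ = ⊥ := inf_compl_eq_bot
end

section
/- Let A be a Boolean algebra, X = UV(A) its space of proper filters with topology generated by {â | a ∈ A}, and for open U let U* = int(X \ U) be the pseudocomplement. If U is compact open in X, then ¬U = U*, where ¬U = {F | ∀ proper filters F' ⊇ F, F' ∉ U}. -/
variable {A : Type*} [BooleanAlgebra A]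

namespace PropFilter

lemma finset_inf_mem (F : PropFilter A) {ι : Type*} (s : Finset ι) (f : ι → A)
    (h : ∀ i ∈ s, f i ∈ F.carrier) : s.inf f ∈ F.carrier := by
  classical
  induction s using Finset.induction with
  | empty => exact F.top_mem
  | insert i s _ ih =>
    rw [Finset.inf_insert]
    exact F.inf_mem _ _ (h i (Finset.mem_insert_self i s))
      (ih fun j hj => h j (Finset.mem_insert_of_mem hj))

def adjoin (F : PropFilter A) (a : A) (h : aᶜ ∉ F.carrier) : PropFilter A where
  carrier := {x | ∃ b ∈ F.carrier, b ⊓ a ≤ x}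
  upward := fun _ _ ⟨b, hb, hbx⟩ hxy => ⟨b, hb, hbx.trans hxy⟩
  inf_mem := fun _ _ ⟨b, hb, hbx⟩ ⟨c, hc, hcy⟩ =>
    ⟨b ⊓ c, F.inf_mem _ _ hb hc, le_inf
      ((inf_le_inf_right a inf_le_left).trans hbx) ((inf_le_inf_right a inf_le_right).trans hcy)⟩
  top_mem := ⟨⊤, F.top_mem, le_top⟩
  proper := fun ⟨b, hb, hba⟩ =>
    h (F.upward b _ hb (le_compl_iff_disjoint_right.2 (disjoint_iff_inf_le.2 hba)))

lemma compl_mem_of_forall_notMem {F : PropFilter A} {a : A}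
    (h : ∀ G : PropFilter A, F.carrier ⊆ G.carrier → a ∉ G.carrier) : aᶜ ∈ F.carrier := by
  by_contra hcompl
  exact h (F.adjoin a hcompl) (fun b hb => ⟨b, hb, inf_le_left⟩) ⟨⊤, F.top_mem, inf_le_right⟩

end PropFilter

lemma hat_mono {a b : A} (hab : a ≤ b) : hat a ⊆ hat b :=
  fun F hF => F.upward a b hF hab

lemma disjoint_hat_compl (a : A) : Disjoint (hat aᶜ) (hat a) :=
  Set.disjoint_left.2 fun F hFc hFa =>
    F.proper (by simpa using F.inf_mem _ _ hFc hFa)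

lemma isTopologicalBasis_hat :
    TopologicalSpace.IsTopologicalBasis (Set.range (hat : A → Set (PropFilter A))) := by
  refine ⟨?_, ?_, ?_⟩
  · rintro _ ⟨a, rfl⟩ _ ⟨b, rfl⟩ F ⟨hFa, hFb⟩
    exact ⟨hat (a ⊓ b), ⟨a ⊓ b, rfl⟩, F.inf_mem a b hFa hFb,
      Set.subset_inter (hat_mono inf_le_left) (hat_mono inf_le_right)⟩
  · exact Set.eq_univ_of_forall fun F => Set.mem_sUnion.2 ⟨hat ⊤, ⟨⊤, rfl⟩, F.top_mem⟩
  · simp only [Set.range, eq_comm]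
    rfl

lemma isOpen_hat (a : A) : IsOpen (hat a) :=
  isTopologicalBasis_hat.isOpen ⟨a, rfl⟩

lemma specializes_of_carrier_subset {F G : PropFilter A} (h : F.carrier ⊆ G.carrier) : G ⤳ F := by
  rw [specializes_iff_forall_open]
  intro V hV hFV
  obtain ⟨_, ⟨a, rfl⟩, hFa, haV⟩ := isTopologicalBasis_hat.exists_subset_of_mem_open hFV hV
  exact haV (h hFa)

lemma exists_finset_eq_biUnion_hat {U : Set (PropFilter A)} (hc : IsCompact U) (ho : IsOpen U) :
    ∃ s : Finset A, U = ⋃ a ∈ s, hat a := by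
  obtain ⟨s, hs, rfl⟩ :=
    eq_finite_iUnion_of_isTopologicalBasis_of_isCompact_open hat isTopologicalBasis_hat U hc ho
  exact ⟨hs.toFinset, by simp⟩

theorem stmt14 (U : Set (PropFilter A)) (hc : IsCompact U) (ho : IsOpen U) :
    {F : PropFilter A | ∀ F' : PropFilter A, F.carrier ⊆ F'.carrier → F' ∉ U}
      = interior Uᶜ := by
  ext F
  refine ⟨fun hF => ?_, fun hF F' hFF' => interior_subset
    ((specializes_of_carrier_subset hFF').mem_open isOpen_interior hF)⟩
  obtain ⟨s, rfl⟩ := exists_finset_eq_biUnion_hat hc ho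
  have hcompl : ∀ a ∈ s, aᶜ ∈ F.carrier := fun a ha =>
    PropFilter.compl_mem_of_forall_notMem fun G hFG hGa =>
      hF G hFG (Set.mem_biUnion ha hGa)
  have hmiss : hat (s.inf compl) ⊆ (⋃ a ∈ s, hat a)ᶜ := fun H hH hHU => by
    obtain ⟨a, ha, hHa⟩ := Set.mem_iUnion₂.1 hHU
    exact Set.disjoint_left.1 (disjoint_hat_compl a) (hat_mono (Finset.inf_le ha) hH) hHa
  exact interior_maximal hmiss (isOpen_hat _) (F.finset_inf_mem s compl hcompl)
end

section
/- Let A and B be Boolean algebras and h : A → B a Boolean homomorphism. For each proper filter G' of A and proper filter F of B with h⁻¹[F] ⊆ G', the filter G of B generated by h[G'] ∪ F is a proper filter satisfying F ⊆ G and h⁻¹[G] = G'. -/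
/-- A (not necessarily proper) filter of a Boolean algebra, as a set. -/
def IsFilter {B : Type*} [BooleanAlgebra B] (T : Set B) : Prop :=
  (∀ a b : B, a ∈ T → a ≤ b → b ∈ T) ∧ (∀ a b : B, a ∈ T → b ∈ T → a ⊓ b ∈ T) ∧
    (⊤ : B) ∈ T

/-- The filter generated by a set: the intersection of all filters containing it. -/
def filterGen {B : Type*} [BooleanAlgebra B] (S : Set B) : Set B :=
  ⋂₀ {T : Set B | S ⊆ T ∧ IsFilter T}

theorem stmt16 {A B : Type*} [BooleanAlgebra A] [BooleanAlgebra B]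
    (h : BoundedLatticeHom A B) (G' : PropFilter A) (F : PropFilter B)
    (hsub : (⇑h) ⁻¹' F.carrier ⊆ G'.carrier) :
    (⊥ : B) ∉ filterGen ((⇑h) '' G'.carrier ∪ F.carrier) ∧
    F.carrier ⊆ filterGen ((⇑h) '' G'.carrier ∪ F.carrier) ∧
    (⇑h) ⁻¹' filterGen ((⇑h) '' G'.carrier ∪ F.carrier) = G'.carrier := by
  set S := (⇑h) '' G'.carrier ∪ F.carrier with hS
  set E : Set B := {b | ∃ a ∈ G'.carrier, ∃ f ∈ F.carrier, h a ⊓ f ≤ b} with hE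
  have hSE : S ⊆ E := by
    rintro b (⟨a, ha, rfl⟩ | hb)
    · exact ⟨a, ha, ⊤, F.top_mem, by simp⟩
    · exact ⟨⊤, G'.top_mem, b, hb, by simp⟩
  have hEfilt : IsFilter E := by
    refine ⟨?_, ?_, ⟨⊤, G'.top_mem, ⊤, F.top_mem, le_top⟩⟩
    · rintro x y ⟨a, ha, f, hf, hle⟩ hxy
      exact ⟨a, ha, f, hf, hle.trans hxy⟩
    · rintro x y ⟨a, ha, f, hf, hle⟩ ⟨a', ha', f', hf', hle'⟩
      refine ⟨a ⊓ a', G'.inf_mem _ _ ha ha', f ⊓ f', F.inf_mem _ _ hf hf', ?_⟩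
      rw [map_inf]
      calc (h a ⊓ h a') ⊓ (f ⊓ f') ≤ (h a ⊓ f) ⊓ (h a' ⊓ f') := by
            apply le_inf <;> apply le_inf
            · exact inf_le_left.trans inf_le_left
            · exact inf_le_right.trans inf_le_left
            · exact inf_le_left.trans inf_le_right
            · exact inf_le_right.trans inf_le_right
        _ ≤ x ⊓ y := inf_le_inf hle hle'
  have hgen : filterGen S = E := by
    apply subset_antisymm
    · exact Set.sInter_subset_of_mem ⟨hSE, hEfilt⟩
    · rintro b ⟨a, ha, f, hf, hle⟩
      intro T hT
      obtain ⟨hST, hup, hinf, -⟩ := hT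
      exact hup _ _ (hinf _ _ (hST (Or.inl ⟨a, ha, rfl⟩)) (hST (Or.inr hf))) hle
  rw [hgen]
  refine ⟨?_, ?_, ?_⟩
  · rintro ⟨a, ha, f, hf, hle⟩
    have hbot : h a ⊓ f = ⊥ := le_bot_iff.mp hle
    have : f ≤ h aᶜ := by
      rw [map_compl']
      exact le_compl_iff_disjoint_right.mpr (disjoint_iff.mpr (by rw [inf_comm]; exact hbot))
    have : aᶜ ∈ G'.carrier := hsub (F.upward _ _ hf this)
    have := G'.inf_mem _ _ ha this
    simp at this
    exact G'.proper this
  · exact fun f hf => hSE (Or.inr hf)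
  · ext a
    constructor
    · rintro ⟨a', ha', f, hf, hle⟩
      have hfle : f ≤ h (a'ᶜ ⊔ a) := by
        rw [map_sup, map_compl']
        calc f = (h a' ⊓ f) ⊔ ((h a')ᶜ ⊓ f) := by
              rw [← inf_sup_right]; simp
          _ ≤ (h a')ᶜ ⊔ h a :=
              sup_le (hle.trans le_sup_right) (inf_le_left.trans le_sup_left)
      have hmem : a'ᶜ ⊔ a ∈ G'.carrier := hsub (F.upward _ _ hf hfle)
      have := G'.inf_mem _ _ ha' hmem
      refine G'.upward _ _ this ?_
      calc a' ⊓ (a'ᶜ ⊔ a) = a' ⊓ a := by rw [inf_sup_left]; simp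
        _ ≤ a := inf_le_right
    · intro ha
      exact ⟨a, ha, ⊤, F.top_mem, by simp⟩
end

section
/- Let P and P' be posets and f : P → P' an order-preserving map satisfying the p-morphism condition (if f(x) ≤' y' then there exists y ≥ x with f(y) = y'). If U ⊆ P' is regular open in the upset topology of P', then f⁻¹[U] is regular open in the upset topology of P. -/
/-- The upset (Alexandroff) topology on a preorder: opens are the up-closed sets. -/
def upsetTopology (S : Type*) [Preorder S] : TopologicalSpace S where
  IsOpen U := ∀ ⦃x⦄, x ∈ U → ∀ ⦃y⦄, x ≤ y → y ∈ U
  isOpen_univ := fun _ _ _ _ => trivial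
  isOpen_inter := fun _ _ hU hV _ hx _ hxy => ⟨hU hx.1 hxy, hV hx.2 hxy⟩
  isOpen_sUnion := fun 𝒮 h x hx y hxy => by
    obtain ⟨U, hU, hxU⟩ := hx
    exact ⟨U, hU, h U hU hxU hxy⟩

lemma upset_interior_eq {S : Type*} [Preorder S] (A : Set S) :
    @interior S (upsetTopology S) A = {x | ∀ y, x ≤ y → y ∈ A} := by
  letI := upsetTopology S
  apply Set.Subset.antisymm
  · intro x hx y hxy
    obtain ⟨V, ⟨hVopen, hVA⟩, hxV⟩ := hx
    exact hVA (hVopen hxV hxy)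
  · intro x hx
    refine ⟨{x | ∀ y, x ≤ y → y ∈ A}, ⟨?_, ?_⟩, hx⟩
    · intro a ha b hab y hby
      exact ha y (le_trans hab hby)
    · intro a ha
      exact ha a le_rfl

lemma upset_closure_eq {S : Type*} [Preorder S] (A : Set S) :
    @closure S (upsetTopology S) A = {x | ∃ y, x ≤ y ∧ y ∈ A} := by
  letI := upsetTopology S
  apply Set.Subset.antisymm
  · apply closure_minimal
    · intro x hx
      exact ⟨x, le_rfl, hx⟩
    · rw [← isOpen_compl_iff]
      intro a ha b hab hb
      obtain ⟨y, hby, hyA⟩ := hb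
      exact ha ⟨y, le_trans hab hby, hyA⟩
  · intro x ⟨y, hxy, hyA⟩
    have hy : y ∈ closure A := subset_closure hyA
    by_contra hx
    have hopen : IsOpen (closure A)ᶜ := isOpen_compl_iff.mpr isClosed_closure
    exact (hopen hx hxy) hy

theorem stmt17 {P P' : Type*} [PartialOrder P] [PartialOrder P'] (f : P → P')
    (hmono : Monotone f)
    (hp : ∀ (x : P) (y' : P'), f x ≤ y' → ∃ y : P, x ≤ y ∧ f y = y')
    (U : Set P')
    (hreg : @interior P' (upsetTopology P') (@closure P' (upsetTopology P') U) = U) :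
    @interior P (upsetTopology P) (@closure P (upsetTopology P) (f ⁻¹' U)) = f ⁻¹' U := by
  rw [upset_closure_eq, upset_interior_eq]
  rw [upset_closure_eq, upset_interior_eq] at hreg
  ext x
  constructor
  · intro hx
    show f x ∈ U
    rw [← hreg]
    intro y' hy'
    obtain ⟨y, hxy, hfy⟩ := hp x y' hy'
    obtain ⟨z, hyz, hz⟩ := hx y hxy
    exact ⟨f z, hfy ▸ hmono hyz, hz⟩
  · intro hx y hxy
    refine ⟨y, le_rfl, ?_⟩
    show f y ∈ U
    rw [← hreg]
    intro z' hz'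
    rw [← hreg] at hx
    exact hx z' (le_trans (hmono hxy) hz')
end

section
/- Let A be a Boolean algebra. The map a ↦ ↑a is a bijection from the set of atoms of A to the set of isolated points of the space UV(A) of proper filters of A (a point F is isolated iff {F} is open). -/
variable {A : Type*} [BooleanAlgebra A]

theorem PropFilter.ext' {F G : PropFilter A} (h : F.carrier = G.carrier) : F = G := by
  cases F; cases G; simp_all

/-- The principal filter of an atom. -/
def atomFilter (a : A) (ha : IsAtom a) : PropFilter A where
  carrier := Set.Ici a
  upward := fun x y hx hxy => le_trans hx hxy
  inf_mem := fun x y hx hy => le_inf hx hy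
  top_mem := le_top
  proper := fun h => ha.1 (le_bot_iff.mp h)

theorem hat_eq_singleton (a : A) (ha : IsAtom a) :
    hat a = {atomFilter a ha} := by
  ext F
  constructor
  · intro (hF : a ∈ F.carrier)
    refine Set.mem_singleton_iff.mpr (PropFilter.ext' ?_)
    ext b
    constructor
    · intro hb
      have h1 : a ⊓ b ∈ F.carrier := F.inf_mem _ _ hF hb
      have h2 : a ⊓ b ≠ ⊥ := fun h => F.proper (h ▸ h1)
      have h3 : a ⊓ b = a := by
        rcases (ha.le_iff.mp inf_le_left) with h | h
        · exact absurd h h2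
        · exact h
      exact h3.symm.le.trans inf_le_right
    · intro hb
      exact F.upward a b hF hb
  · rintro rfl
    exact le_refl a

theorem mem_open_aux {s : Set (PropFilter A)}
    (hs : TopologicalSpace.GenerateOpen {S | ∃ a : A, S = hat a} s)
    {F : PropFilter A} (hF : F ∈ s) :
    ∃ a : A, a ∈ F.carrier ∧ hat a ⊆ s := by
  induction hs with
  | basic S hS =>
      obtain ⟨a, rfl⟩ := hS
      exact ⟨a, hF, subset_rfl⟩
  | univ => exact ⟨⊤, F.top_mem, Set.subset_univ _⟩
  | inter s t _ _ ihs iht =>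
      obtain ⟨a, ha, has⟩ := ihs hF.1
      obtain ⟨b, hb, hbt⟩ := iht hF.2
      refine ⟨a ⊓ b, F.inf_mem _ _ ha hb, fun G hG => ?_⟩
      exact ⟨has (G.upward _ _ hG inf_le_left), hbt (G.upward _ _ hG inf_le_right)⟩
  | sUnion S _ ih =>
      obtain ⟨t, ht, hFt⟩ := hF
      obtain ⟨a, ha, hat⟩ := ih t ht hFt
      exact ⟨a, ha, hat.trans (Set.subset_sUnion_of_mem ht)⟩

theorem stmt19 :
    ∃ f : {a : A // IsAtom a} → {F : PropFilter A // IsOpen ({F} : Set (PropFilter A))},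
      Function.Bijective f ∧
      ∀ a : {a : A // IsAtom a}, (f a).1.carrier = Set.Ici a.1 := by
  refine ⟨fun a => ⟨atomFilter a.1 a.2, ?_⟩, ⟨?_, ?_⟩, fun a => rfl⟩
  · rw [← hat_eq_singleton a.1 a.2]
    exact TopologicalSpace.GenerateOpen.basic _ ⟨a.1, rfl⟩
  · rintro ⟨a, ha⟩ ⟨b, hb⟩ h
    have : (Set.Ici a : Set A) = Set.Ici b := congrArg (fun x => x.1.carrier) h
    exact Subtype.ext (le_antisymm (Set.Ici_subset_Ici.mp this.ge) (Set.Ici_subset_Ici.mp this.le))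
  · rintro ⟨F, hF⟩
    obtain ⟨a, haF, has⟩ := mem_open_aux hF rfl
    have hane : a ≠ ⊥ := fun h => F.proper (h ▸ haF)
    have hFa : ∀ b : A, b ≠ ⊥ → b ≤ a → F.carrier = Set.Ici b := by
      intro b hb hba
      have : ({ carrier := Set.Ici b, upward := fun x y hx hxy => le_trans hx hxy,
                inf_mem := fun x y hx hy => le_inf hx hy, top_mem := le_top,
                proper := fun h => hb (le_bot_iff.mp h) } : PropFilter A) ∈ hat a := hba
      have := has this
      simp only [Set.mem_singleton_iff] at this
      exact congrArg PropFilter.carrier this.symm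
    have hatom : IsAtom a := by
      constructor
      · exact hane
      · intro b hba
        by_contra hb
        have h1 := hFa a hane le_rfl
        have h2 := hFa b hb hba.le
        rw [h1] at h2
        exact absurd (le_antisymm hba.le (h2.ge le_rfl)) hba.ne
    refine ⟨⟨a, hatom⟩, Subtype.ext (PropFilter.ext' ?_)⟩
    exact (hFa a hane le_rfl).symm
end
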